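/- arXiv:1108.1486 — 7 statements merged into one kernel-verified Lean document; each statement's English description precedes it below -/
import Mathlib

section
/- For every infinite sequence (P_i)_{i≥1} of polynomials in K[x_1,…,x_n] such that for each i either P_{i+1} < P_i or P_{i+1} ≈ P_i, there exists an integer m such that P_i ≈ P_m for all i ≥ m; in particular, from index m on all the P_i have the same set of monomials in their supports. -/
open MvPolynomial

variable {n : ℕ} {K : Type*} [Field K]

/-- Lexicographic order on monomials (exponent vectors) induced by the variable
ordering `x_1 < ⋯ < x_n`: higher-indexed variables are more significant. -/
def MonLt {n : ℕ} (a b : Fin n →₀ ℕ) : Prop :=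
  ∃ i : Fin n, a i < b i ∧ ∀ j : Fin n, i < j → a j = b j

/-- The order `P < Q` on polynomials: `P < Q` iff `lt(P) <_lex lt(Q)`, or the
heading terms agree and the tails satisfy `P - lm(P) < Q - lm(Q)` (with `0 < R`
for every nonzero `R`).  Equivalently (since only supports matter): the supports
of `P` and `Q` differ and the lex-greatest monomial in their symmetric
difference belongs to the support of `Q`. -/
def PoLt (P Q : MvPolynomial (Fin n) K) : Prop :=
  ∃ m ∈ Q.support \ P.support,
    ∀ m' ∈ (P.support \ Q.support) ∪ (Q.support \ P.support), m' ≠ m → MonLt m' m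

/-- `P ≈ Q` : neither `P < Q` nor `Q < P`. -/
def PoEq (P Q : MvPolynomial (Fin n) K) : Prop := ¬ PoLt P Q ∧ ¬ PoLt Q P

/-- The class of a polynomial: the (1-based) index of its leading variable;
`0` for (nonzero) constants. -/
noncomputable def cls (P : MvPolynomial (Fin n) K) : ℕ :=
  P.vars.sup fun i => i.1 + 1

/-- The leading degree of a polynomial: its degree in its leading variable;
`0` for constants. -/
noncomputable def ldeg (P : MvPolynomial (Fin n) K) : ℕ :=
  WithBot.recBotCoe 0 (fun i => P.degreeOf i) P.vars.max

/-- Ranking of polynomials: `P ≺ Q`. -/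
def RankLt (P Q : MvPolynomial (Fin n) K) : Prop :=
  cls P < cls Q ∨ (cls P = cls Q ∧ ldeg P < ldeg Q)

/-- `P ∼ Q` : neither `P ≺ Q` nor `Q ≺ P`. -/
def RankEq (P Q : MvPolynomial (Fin n) K) : Prop := ¬ RankLt P Q ∧ ¬ RankLt Q P

/-- `P` is reduced w.r.t. a nonconstant `Q`: `deg(P, lv(Q)) < ldeg(Q)`. -/
def ReducedWrt (P Q : MvPolynomial (Fin n) K) : Prop :=
  ∀ i : Fin n, Q.vars.max = (i : WithBot (Fin n)) → P.degreeOf i < Q.degreeOf i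

/-- A triangular set: a list of nonconstant polynomials with strictly
increasing leading variables. -/
def IsTriangular (T : List (MvPolynomial (Fin n) K)) : Prop :=
  (∀ P ∈ T, 0 < cls P) ∧ T.Chain' fun P Q => cls P < cls Q

/-- Ranking of triangular sets (as lists): `T ≺ S`. -/
def TriLt (T S : List (MvPolynomial (Fin n) K)) : Prop :=
  (∃ i, i < T.length ∧ i < S.length ∧
      (∀ j < i, RankEq (T.getD j 0) (S.getD j 0)) ∧
      RankLt (T.getD i 0) (S.getD i 0)) ∨
  (S.length < T.length ∧ ∀ j < S.length, RankEq (T.getD j 0) (S.getD j 0))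

/-- `T ∼ S` : neither `T ≺ S` nor `S ≺ T`. -/
def TriEq (T S : List (MvPolynomial (Fin n) K)) : Prop := ¬ TriLt T S ∧ ¬ TriLt S T

/-- An ascending set: either a triangular set in which every element is reduced
w.r.t. all earlier elements (non-contradictory), or a single nonzero constant
(contradictory). -/
def IsAscending (A : List (MvPolynomial (Fin n) K)) : Prop :=
  (IsTriangular A ∧ A.Pairwise fun P Q => ReducedWrt Q P) ∨
  ∃ a : K, a ≠ 0 ∧ A = [MvPolynomial.C a]

/-- A basic set of a polynomial set `S`: an ascending set contained in `S`
such that no ascending set contained in `S` has strictly lower ranking. -/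
def IsBasicSet (B : List (MvPolynomial (Fin n) K))
    (S : Set (MvPolynomial (Fin n) K)) : Prop :=
  IsAscending B ∧ (∀ b ∈ B, b ∈ S) ∧
    ∀ B' : List (MvPolynomial (Fin n) K),
      IsAscending B' → (∀ b ∈ B', b ∈ S) → ¬ TriLt B' B

/-- A medial set of a polynomial set `S`: an ascending set contained in the
ideal `⟨S⟩` whose ranking is not higher than that of any basic set of `S`. -/
def IsMedialSet (M : List (MvPolynomial (Fin n) K))
    (S : Set (MvPolynomial (Fin n) K)) : Prop :=
  IsAscending M ∧ (∀ F ∈ M, F ∈ Ideal.span S) ∧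
    ∀ B : List (MvPolynomial (Fin n) K), IsBasicSet B S → ¬ TriLt B M

/-- The leading coefficient of `P` regarded as a univariate polynomial in
`x_q`, as a polynomial in the remaining variables. -/
noncomputable def lcOf (P : MvPolynomial (Fin n) K) (q : Fin n) :
    MvPolynomial (Fin n) K :=
  ∑ m ∈ P.support.filter fun m => m q = P.degreeOf q,
    MvPolynomial.monomial (m.erase q) (P.coeff m)

/-- The initial of `P`: its leading coefficient w.r.t. its leading variable. -/
noncomputable def initOf (P : MvPolynomial (Fin n) K) : MvPolynomial (Fin n) K :=
  WithBot.recBotCoe P (fun q => lcOf P q) P.vars.max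

/-!
`MonLt` is the colex order on `Fin n →₀ ℕ` (the highest variable is most significant), a well-order,
and `PoLt P Q` says that the greatest monomial of the symmetric difference of the supports lies in
`supp Q`, i.e. it is the colex order on finite sets of monomials. Colex on the finite subsets of a
well-order is well-founded, since a set is compared like its indicator function. Hence a
non-increasing sequence of supports is eventually constant, and `≈` only depends on the support.
-/

theorem monLt_iff_toColex_lt {a b : Fin n →₀ ℕ} : MonLt a b ↔ toColex a < toColex b :=
  exists_congr fun _ => and_comm

namespace Finset.Colex

variable {α : Type*} [LinearOrder α] {s t : Finset α}

theorem toColex_lt_toColex_iff_exists_forall_ne_lt :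
    toColex s < toColex t ↔ ∃ a ∈ t \ s, ∀ b ∈ s \ t ∪ t \ s, b ≠ a → b < a := by
  rw [toColex_lt_toColex_iff_exists_forall_lt]
  constructor
  · rintro ⟨a, hat, has, hlt⟩
    have hne : (t \ s).Nonempty := ⟨a, mem_sdiff.2 ⟨hat, has⟩⟩
    have ha_le : a ≤ (t \ s).max' hne := le_max' _ a (mem_sdiff.2 ⟨hat, has⟩)
    refine ⟨_, max'_mem _ hne, fun b hb hbm => ?_⟩
    rcases mem_union.1 hb with hb | hb
    · exact (hlt b (mem_sdiff.1 hb).1 (mem_sdiff.1 hb).2).trans_le ha_le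
    · exact (le_max' _ b hb).lt_of_ne hbm
  · rintro ⟨a, ha, hlt⟩
    obtain ⟨hat, has⟩ := mem_sdiff.1 ha
    exact ⟨a, hat, has, fun b hbs hbt =>
      hlt b (mem_union_left _ (mem_sdiff.2 ⟨hbs, hbt⟩)) (ne_of_mem_of_not_mem hbs has)⟩

theorem toColex_indicator_lt_of_toColex_lt (hst : toColex s < toColex t) :
    toColex (Finsupp.indicator s fun _ _ => 1) < toColex (Finsupp.indicator t fun _ _ => 1) := by
  obtain ⟨a, ha, hmax⟩ := toColex_lt_toColex_iff_exists_forall_ne_lt.1 hst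
  obtain ⟨hat, has⟩ := mem_sdiff.1 ha
  refine Finsupp.Colex.lt_iff.2 ⟨a, fun b hab => ?_, by simp [Finsupp.indicator_apply, hat, has]⟩
  have hmem : b ∈ s ↔ b ∈ t := by
    by_contra hb
    have hb' : b ∈ s \ t ∪ t \ s := by grind
    exact (hmax b hb' hab.ne').not_gt hab
  simp [Finsupp.indicator_apply, hmem]

instance instWellFoundedLT [WellFoundedLT α] : WellFoundedLT (Colex (Finset α)) :=
  StrictMono.wellFoundedLT (f := fun s => toColex (Finsupp.indicator (ofColex s) fun _ _ => 1))
    fun _ _ => toColex_indicator_lt_of_toColex_lt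

end Finset.Colex

def supportColex (P : MvPolynomial (Fin n) K) : Colex (Finset (Colex (Fin n →₀ ℕ))) :=
  toColex (P.support.map toColex.toEmbedding)

theorem supportColex_eq_iff {P Q : MvPolynomial (Fin n) K} :
    supportColex P = supportColex Q ↔ P.support = Q.support := by
  rw [supportColex, supportColex, toColex_inj, Finset.map_inj]

theorem poLt_iff_supportColex_lt {P Q : MvPolynomial (Fin n) K} :
    PoLt P Q ↔ supportColex P < supportColex Q := by
  classical
  rw [supportColex, supportColex, Finset.Colex.toColex_lt_toColex_iff_exists_forall_ne_lt, PoLt]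
  simp [← Finset.map_sdiff, ← Finset.map_union, monLt_iff_toColex_lt]

theorem poEq_iff_support_eq {P Q : MvPolynomial (Fin n) K} :
    PoEq P Q ↔ P.support = Q.support := by
  rw [PoEq, poLt_iff_supportColex_lt, poLt_iff_supportColex_lt, not_lt, not_lt, and_comm,
    ← le_antisymm_iff, supportColex_eq_iff]

theorem poLt_sequence_stabilizes_general
    {n : ℕ} {K : Type*} [Field K]
    (P : ℕ → MvPolynomial (Fin n) K)
    (h : ∀ i, PoLt (P (i + 1)) (P i) ∨ PoEq (P (i + 1)) (P i)) :
    ∃ m : ℕ, ∀ i, m ≤ i → PoEq (P i) (P m) ∧ (P i).support = (P m).support := by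
  have hanti : Antitone fun i => supportColex (P i) := antitone_nat_of_succ_le fun i =>
    (h i).elim (fun hlt => (poLt_iff_supportColex_lt.1 hlt).le)
      (fun heq => (supportColex_eq_iff.2 (poEq_iff_support_eq.1 heq)).le)
  obtain ⟨m, hm⟩ := WellFoundedLT.antitone_chain_condition hanti
  refine ⟨m, fun i hi => ?_⟩
  have hsupp : (P i).support = (P m).support := supportColex_eq_iff.1 (hm i hi).symm
  exact ⟨poEq_iff_support_eq.2 hsupp, hsupp⟩

/-- any `≳`-decreasing sequence of polynomials stabilizes up to `≈`;
in particular from some index on all terms have the same set of monomials. -/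
theorem poLt_sequence_stabilizes
    {n : ℕ} {K : Type*} [Field K] (hn : 1 ≤ n)
    (P : ℕ → MvPolynomial (Fin n) K)
    (h : ∀ i, PoLt (P (i + 1)) (P i) ∨ PoEq (P (i + 1)) (P i)) :
    ∃ m : ℕ, ∀ i, m ≤ i → PoEq (P i) (P m) ∧ (P i).support = (P m).support :=
  poLt_sequence_stabilizes_general P h
end

section
/- For every infinite sequence (T_i)_{i≥1} of triangular sets in K[x_1,…,x_n] such that for each i either T_{i+1} ≺ T_i or T_{i+1} ∼ T_i, there exists an integer m such that T_i ∼ T_m for all i ≥ m. Equivalently, the strict ranking order ≺ on triangular sets is well-founded, so every nonempty collection of triangular sets contains a minimal element with respect to ≺. -/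
open MvPolynomial

variable {n : ℕ} {K : Type*} [Field K]

/-!
A triangular set has at most `n` elements, since the classes of its elements are distinct
numbers in `1, …, n`. Recording at position `j < n` the rank `(cls, ldeg)` of its `j`-th
element, or `⊤` past its end, turns the ranking `≺` of triangular sets into the lexicographic
order on `Fin n → WithTop (ℕ ×ₗ ℕ)`; the padding by `⊤` is what makes a longer set with the
same leading ranks smaller. That order is a well-order, which gives both claims.
-/

noncomputable def rankKey (P : MvPolynomial (Fin n) K) : ℕ ×ₗ ℕ := toLex (cls P, ldeg P)

theorem rankLt_iff_rankKey_lt {P Q : MvPolynomial (Fin n) K} :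
    RankLt P Q ↔ rankKey P < rankKey Q := by
  rw [rankKey, rankKey, Prod.Lex.toLex_lt_toLex, RankLt]

theorem rankEq_iff_rankKey_eq {P Q : MvPolynomial (Fin n) K} :
    RankEq P Q ↔ rankKey P = rankKey Q := by
  rw [RankEq, rankLt_iff_rankKey_lt, rankLt_iff_rankKey_lt, not_lt, not_lt, and_comm,
    le_antisymm_iff]

theorem cls_le (P : MvPolynomial (Fin n) K) : cls P ≤ n :=
  Finset.sup_le fun i _ => i.2

theorem IsTriangular.length_le {T : List (MvPolynomial (Fin n) K)} (hT : IsTriangular T) :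
    T.length ≤ n := by
  have hnodup : (T.map cls).Nodup :=
    List.pairwise_map.2 ((List.isChain_iff_pairwise.1 hT.2).imp ne_of_lt)
  have hsub : (T.map cls).toFinset ⊆ Finset.Icc 1 n := by
    intro c hc
    obtain ⟨P, hP, rfl⟩ := List.mem_map.1 (List.mem_toFinset.1 hc)
    exact Finset.mem_Icc.2 ⟨hT.1 P hP, cls_le P⟩
  calc T.length = (T.map cls).toFinset.card := by
        rw [List.toFinset_card_of_nodup hnodup, List.length_map]
    _ ≤ (Finset.Icc 1 n).card := Finset.card_le_card hsub
    _ = n := by simp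

noncomputable def triKey (T : List (MvPolynomial (Fin n) K)) : Fin n → WithTop (ℕ ×ₗ ℕ) :=
  fun j => if (j : ℕ) < T.length then (rankKey (T.getD j 0) : WithTop (ℕ ×ₗ ℕ)) else ⊤

section triKey

variable {T S : List (MvPolynomial (Fin n) K)} {j : Fin n}

theorem triKey_of_lt (h : (j : ℕ) < T.length) : triKey T j = rankKey (T.getD j 0) :=
  if_pos h

theorem triKey_of_le (h : T.length ≤ (j : ℕ)) : triKey T j = ⊤ :=
  if_neg (not_lt.2 h)

theorem triKey_lt_top_iff : triKey T j < ⊤ ↔ (j : ℕ) < T.length := by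
  by_cases h : (j : ℕ) < T.length
  · simp [triKey_of_lt h, h]
  · simp [triKey_of_le (not_lt.1 h), h]

theorem triKey_eq_triKey_of_rankEq (hT : (j : ℕ) < T.length) (hS : (j : ℕ) < S.length)
    (h : RankEq (T.getD j 0) (S.getD j 0)) : triKey T j = triKey S j := by
  rw [triKey_of_lt hT, triKey_of_lt hS, rankEq_iff_rankKey_eq.1 h]

theorem rankEq_of_triKey_eq (hT : (j : ℕ) < T.length) (h : triKey T j = triKey S j) :
    (j : ℕ) < S.length ∧ RankEq (T.getD j 0) (S.getD j 0) := by
  have hS : (j : ℕ) < S.length := triKey_lt_top_iff.1 (h ▸ triKey_lt_top_iff.2 hT)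
  rw [triKey_of_lt hT, triKey_of_lt hS, WithTop.coe_inj] at h
  exact ⟨hS, rankEq_iff_rankKey_eq.2 h⟩

theorem triLt_of_triKey_lt (h : toLex (triKey T) < toLex (triKey S)) : TriLt T S := by
  obtain ⟨i, hpre, hlt⟩ := h
  have hiT : (i : ℕ) < T.length := triKey_lt_top_iff.1 (lt_top_of_lt hlt)
  have hpre' : ∀ j < (i : ℕ), j < S.length ∧ RankEq (T.getD j 0) (S.getD j 0) := fun j hj =>
    rankEq_of_triKey_eq (j := ⟨j, hj.trans i.2⟩) (hj.trans hiT) (hpre _ hj)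
  by_cases hiS : (i : ℕ) < S.length
  · refine Or.inl ⟨i, hiT, hiS, fun j hj => (hpre' j hj).2, ?_⟩
    have hlt : triKey T i < triKey S i := hlt
    rwa [triKey_of_lt hiT, triKey_of_lt hiS, WithTop.coe_lt_coe, ← rankLt_iff_rankKey_lt] at hlt
  · refine Or.inr ⟨by omega, fun j hj => (hpre' j (by omega)).2⟩

theorem triKey_lt_of_triLt (hT : T.length ≤ n) (h : TriLt T S) :
    toLex (triKey T) < toLex (triKey S) := by
  rcases h with ⟨i, hiT, hiS, hpre, hlt⟩ | ⟨hlen, hpre⟩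
  · refine ⟨⟨i, by omega⟩, fun j (hj : (j : ℕ) < i) => ?_, ?_⟩
    · exact triKey_eq_triKey_of_rankEq (by omega) (by omega) (hpre j hj)
    · show triKey T _ < triKey S _
      rw [triKey_of_lt hiT, triKey_of_lt hiS]
      exact WithTop.coe_lt_coe.2 (rankLt_iff_rankKey_lt.1 hlt)
  · refine ⟨⟨S.length, by omega⟩, fun j (hj : (j : ℕ) < S.length) => ?_, ?_⟩
    · exact triKey_eq_triKey_of_rankEq (by omega) hj (hpre j hj)
    · show triKey T _ < triKey S _
      rw [triKey_of_lt hlen, triKey_of_le le_rfl]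
      exact WithTop.coe_lt_top _

theorem triLt_iff_triKey_lt (hT : T.length ≤ n) :
    TriLt T S ↔ toLex (triKey T) < toLex (triKey S) :=
  ⟨triKey_lt_of_triLt hT, triLt_of_triKey_lt⟩

theorem triEq_iff_triKey_eq (hT : T.length ≤ n) (hS : S.length ≤ n) :
    TriEq T S ↔ triKey T = triKey S := by
  rw [TriEq, triLt_iff_triKey_lt hT, triLt_iff_triKey_lt hS]
  exact ⟨fun ⟨hTS, hST⟩ => toLex_inj.1 (le_antisymm (not_lt.1 hST) (not_lt.1 hTS)),
    fun h => h ▸ ⟨lt_irrefl _, lt_irrefl _⟩⟩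

theorem triLt_or_triEq_iff_triKey_le (hT : T.length ≤ n) (hS : S.length ≤ n) :
    TriLt T S ∨ TriEq T S ↔ toLex (triKey T) ≤ toLex (triKey S) := by
  rw [triLt_iff_triKey_lt hT, triEq_iff_triKey_eq hT hS]
  exact (le_iff_lt_or_eq.trans (or_congr_right toLex_inj)).symm

end triKey

theorem triangular_sequence_stabilizes_and_min_exists_general
    {n : ℕ} {K : Type*} [Field K] :
    (∀ T : ℕ → List (MvPolynomial (Fin n) K),
        (∀ i, IsTriangular (T i)) →
        (∀ i, TriLt (T (i + 1)) (T i) ∨ TriEq (T (i + 1)) (T i)) →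
        ∃ m : ℕ, ∀ i, m ≤ i → TriEq (T i) (T m)) ∧
    (∀ 𝒮 : Set (List (MvPolynomial (Fin n) K)),
        (∀ T ∈ 𝒮, IsTriangular T) → 𝒮.Nonempty →
        ∃ T ∈ 𝒮, ∀ S ∈ 𝒮, ¬ TriLt S T) := by
  constructor
  · intro T hT hstep
    have hanti : Antitone fun i => toLex (triKey (T i)) := antitone_nat_of_succ_le fun i =>
      (triLt_or_triEq_iff_triKey_le (hT (i + 1)).length_le (hT i).length_le).1 (hstep i)
    obtain ⟨m, hm⟩ := WellFoundedLT.antitone_chain_condition hanti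
    exact ⟨m, fun i hi => (triEq_iff_triKey_eq (hT i).length_le (hT m).length_le).2
      (toLex_inj.1 (hm i hi).symm)⟩
  · intro 𝒮 hT hne
    obtain ⟨_, ⟨T, hT𝒮, rfl⟩, hmin⟩ :=
      wellFounded_lt.has_min ((fun T => toLex (triKey T)) '' 𝒮) (hne.image _)
    exact ⟨T, hT𝒮, fun S hS hlt =>
      hmin _ ⟨S, hS, rfl⟩ (triKey_lt_of_triLt (hT S hS).length_le hlt)⟩

/-- any `≾`-decreasing sequence of triangular sets stabilizes up to `∼`;
equivalently `≺` is well-founded on triangular sets, so every nonempty collection of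
triangular sets has a `≺`-minimal element. -/
theorem triangular_sequence_stabilizes_and_min_exists
    {n : ℕ} {K : Type*} [Field K] (hn : 1 ≤ n) :
    (∀ T : ℕ → List (MvPolynomial (Fin n) K),
        (∀ i, IsTriangular (T i)) →
        (∀ i, TriLt (T (i + 1)) (T i) ∨ TriEq (T (i + 1)) (T i)) →
        ∃ m : ℕ, ∀ i, m ≤ i → TriEq (T i) (T m)) ∧
    (∀ 𝒮 : Set (List (MvPolynomial (Fin n) K)),
        (∀ T ∈ 𝒮, IsTriangular T) → 𝒮.Nonempty →
        ∃ T ∈ 𝒮, ∀ S ∈ 𝒮, ¬ TriLt S T) :=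
  triangular_sequence_stabilizes_and_min_exists_general
end

section
/- Every set P of polynomials in K[x_1,…,x_n] that contains at least one nonzero polynomial has a basic set: there exists an ascending set B all of whose elements belong to P such that no ascending set with all elements in P has strictly lower ranking than B. -/
open MvPolynomial

variable {n : ℕ} {K : Type*} [Field K]

/-! An ascending set has at most `n + 1` elements, so after padding its sequence of
polynomial ranks `(cls, ldeg)` with `⊤` up to length `n + 1`, a lower ranking implies a
lexicographically smaller sequence in `Fin (n + 1) → WithTop (ℕ ×ₗ ℕ)`, a well-founded order.
A minimal element among the ascending subsets of `S`, which exist since `[p]` is ascending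
for every nonzero `p ∈ S`, is then a basic set. -/

noncomputable def rank (P : MvPolynomial (Fin n) K) : ℕ ×ₗ ℕ := toLex (cls P, ldeg P)

theorem rankLt_iff_rank_lt {P Q : MvPolynomial (Fin n) K} : RankLt P Q ↔ rank P < rank Q := by
  rw [rank, rank, Prod.Lex.lt_iff]; rfl

theorem rankEq_iff_rank_eq {P Q : MvPolynomial (Fin n) K} : RankEq P Q ↔ rank P = rank Q := by
  simp only [RankEq, rankLt_iff_rank_lt, not_lt, le_antisymm_iff, and_comm]

theorem IsAscending.length_le_succ {A : List (MvPolynomial (Fin n) K)} (hA : IsAscending A) :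
    A.length ≤ n + 1 := by
  rcases hA with ⟨hT, -⟩ | ⟨a, -, rfl⟩
  · exact hT.length_le.trans n.le_succ
  · simp

theorem isAscending_singleton {p : MvPolynomial (Fin n) K} (hp : p ≠ 0) : IsAscending [p] := by
  by_cases hv : p.vars = ∅
  · have hC := vars_eq_empty_iff_eq_C.1 hv
    refine Or.inr ⟨p.coeff 0, fun h0 => hp ?_, by rw [← hC]⟩
    rw [hC, h0, map_zero]
  · obtain ⟨i, hi⟩ := Finset.nonempty_iff_ne_empty.2 hv
    refine Or.inl ⟨⟨?_, List.isChain_singleton _⟩, List.pairwise_singleton _ _⟩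
    simp only [List.mem_singleton, forall_eq]
    exact Finset.lt_sup_iff.2 ⟨i, hi, i.1.succ_pos⟩

noncomputable def rankSeq (m : ℕ) (T : List (MvPolynomial (Fin n) K)) :
    Lex (Fin m → WithTop (ℕ ×ₗ ℕ)) :=
  toLex fun i => if (i : ℕ) < T.length then (rank (T.getD i 0) : WithTop (ℕ ×ₗ ℕ)) else ⊤

theorem rankSeq_lt_of_triLt {m : ℕ} {T S : List (MvPolynomial (Fin n) K)}
    (hT : T.length ≤ m) (h : TriLt T S) : rankSeq m T < rankSeq m S := by
  rcases h with ⟨i, hiT, hiS, heq, hlt⟩ | ⟨hlen, heq⟩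
  · refine ⟨⟨i, hiT.trans_le hT⟩, fun j (hj : (j : ℕ) < i) => ?_, ?_⟩
    · simp only [rankSeq, Pi.toLex_apply, if_pos (hj.trans hiT), if_pos (hj.trans hiS),
        rankEq_iff_rank_eq.1 (heq j hj)]
    · simpa [rankSeq, hiT, hiS] using rankLt_iff_rank_lt.1 hlt
  · refine ⟨⟨S.length, hlen.trans_le hT⟩, fun j (hj : (j : ℕ) < S.length) => ?_, ?_⟩
    · simp only [rankSeq, Pi.toLex_apply, if_pos (hj.trans hlen), if_pos hj,
        rankEq_iff_rank_eq.1 (heq j hj)]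
    · simp [rankSeq, hlen]

theorem exists_forall_not_triLt {m : ℕ} {𝒜 : Set (List (MvPolynomial (Fin n) K))}
    (hlen : ∀ T ∈ 𝒜, T.length ≤ m) (hne : 𝒜.Nonempty) :
    ∃ B ∈ 𝒜, ∀ T ∈ 𝒜, ¬ TriLt T B := by
  obtain ⟨B, hB, hmin⟩ := (InvImage.wf (rankSeq m) wellFounded_lt).has_min 𝒜 hne
  exact ⟨B, hB, fun T hT hlt => hmin T hT (rankSeq_lt_of_triLt (hlen T hT) hlt)⟩

theorem exists_basicSet_general
    {n : ℕ} {K : Type*} [Field K]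
    (S : Set (MvPolynomial (Fin n) K)) (hS : ∃ p ∈ S, p ≠ 0) :
    ∃ B : List (MvPolynomial (Fin n) K), IsBasicSet B S := by
  obtain ⟨p, hpS, hp⟩ := hS
  have hne : {A | IsAscending A ∧ ∀ b ∈ A, b ∈ S}.Nonempty :=
    ⟨[p], isAscending_singleton hp, by simpa using hpS⟩
  obtain ⟨B, ⟨hB, hBS⟩, hmin⟩ :=
    exists_forall_not_triLt (fun A hA => IsAscending.length_le_succ hA.1) hne
  exact ⟨B, hB, hBS, fun B' hB' hB'S => hmin B' ⟨hB', hB'S⟩⟩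

/-- every set of polynomials containing a nonzero polynomial has a
basic set. -/
theorem exists_basicSet
    {n : ℕ} {K : Type*} [Field K] (hn : 1 ≤ n)
    (S : Set (MvPolynomial (Fin n) K)) (hS : ∃ p ∈ S, p ≠ 0) :
    ∃ B : List (MvPolynomial (Fin n) K), IsBasicSet B S :=
  exists_basicSet_general S hS
end

section
/- Under the characteristic-set hypotheses on P, C = [C_1,…,C_r], I_j = ini(C_j) and I = {I_1,…,I_r}, for any extension field L of K one has the inclusions Zero(C/I) ⊆ Zero(P) ⊆ Zero(C), where zeros are taken in L^n. -/
open MvPolynomial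

variable {n : ℕ} {K : Type*} [Field K]

section ZeroInclusions

variable {R S F : Type*} [CommRing R] [CommRing S] [FunLike F R S] [RingHomClass F R S]

lemma map_eq_zero_of_mem_span (f : F) {T : Set R} (hT : ∀ t ∈ T, f t = 0) {q : R}
    (hq : q ∈ Ideal.span T) : f q = 0 :=
  Ideal.span_le.2 (fun t ht => (RingHom.mem_ker (f := (f : R →+* S))).2 (hT t ht)) hq

lemma map_eq_zero_of_prod_pow_mul_eq_sum [IsDomain S] (f : F) {ι : Type*} (t : Finset ι)
    (I G C : ι → R) (s : ι → ℕ) {p : R}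
    (h : (∏ j ∈ t, I j ^ s j) * p = ∑ j ∈ t, G j * C j)
    (hC : ∀ j ∈ t, f (C j) = 0) (hI : ∀ j ∈ t, f (I j) ≠ 0) : f p = 0 := by
  have hsum : f (∑ j ∈ t, G j * C j) = 0 := by
    rw [map_sum]
    exact Finset.sum_eq_zero fun j hj => by rw [map_mul, hC j hj, mul_zero]
  have hprod : f (∏ j ∈ t, I j ^ s j) ≠ 0 := by
    rw [map_prod]
    exact Finset.prod_ne_zero_iff.2 fun j hj => by rw [map_pow]; exact pow_ne_zero _ (hI j hj)
  rw [← h, map_mul] at hsum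
  exact (mul_eq_zero.1 hsum).resolve_left hprod

end ZeroInclusions

theorem charSet_zero_inclusions_general
    {n : ℕ} {K : Type*} [Field K]
    {L : Type*} [Field L] [Algebra K L]
    (P : Finset (MvPolynomial (Fin n) K))
    (C : List (MvPolynomial (Fin n) K))
    (hCideal : ∀ c ∈ C, c ∈ Ideal.span (↑P : Set (MvPolynomial (Fin n) K)))
    (hprem : ∀ p ∈ P, ∃ (s : ℕ → ℕ) (G : ℕ → MvPolynomial (Fin n) K),
      (∏ j ∈ Finset.range C.length, initOf (C.getD j 0) ^ s j) * p
        = ∑ j ∈ Finset.range C.length, G j * C.getD j 0) :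
    ∀ a : Fin n → L,
      (((∀ c ∈ C, MvPolynomial.aeval a c = 0) ∧
          (∀ c ∈ C, MvPolynomial.aeval a (initOf c) ≠ 0)) →
        ∀ p ∈ P, MvPolynomial.aeval a p = 0) ∧
      ((∀ p ∈ P, MvPolynomial.aeval a p = 0) →
        ∀ c ∈ C, MvPolynomial.aeval a c = 0) := by
  have getD_mem : ∀ j ∈ Finset.range C.length, C.getD j 0 ∈ C := fun j hj => by
    rw [List.getD_eq_getElem _ _ (Finset.mem_range.1 hj)]
    exact List.getElem_mem _
  refine fun a => ⟨fun ⟨hzero, hinit⟩ p hp => ?_, fun hP c hc => ?_⟩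
  · obtain ⟨s, G, hrel⟩ := hprem p hp
    exact map_eq_zero_of_prod_pow_mul_eq_sum (aeval a) _ _ G _ s hrel
      (fun j hj => hzero _ (getD_mem j hj)) (fun j hj => hinit _ (getD_mem j hj))
  · exact map_eq_zero_of_mem_span (aeval a) hP (hCideal c hc)

/-- under the characteristic-set hypotheses,
`Zero(C/I) ⊆ Zero(P) ⊆ Zero(C)` in any extension field `L` of `K`. -/
theorem charSet_zero_inclusions
    {n : ℕ} {K : Type*} [Field K] (hn : 1 ≤ n)
    {L : Type*} [Field L] [Algebra K L]
    (P : Finset (MvPolynomial (Fin n) K)) (hPne : P.Nonempty)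
    (C : List (MvPolynomial (Fin n) K))
    (hCasc : IsAscending C) (hCnc : ∀ c ∈ C, 0 < cls c)
    (hCideal : ∀ c ∈ C, c ∈ Ideal.span (↑P : Set (MvPolynomial (Fin n) K)))
    (hprem : ∀ p ∈ P, ∃ (s : ℕ → ℕ) (G : ℕ → MvPolynomial (Fin n) K),
      (∏ j ∈ Finset.range C.length, initOf (C.getD j 0) ^ s j) * p
        = ∑ j ∈ Finset.range C.length, G j * C.getD j 0) :
    ∀ a : Fin n → L,
      (((∀ c ∈ C, MvPolynomial.aeval a c = 0) ∧
          (∀ c ∈ C, MvPolynomial.aeval a (initOf c) ≠ 0)) →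
        ∀ p ∈ P, MvPolynomial.aeval a p = 0) ∧
      ((∀ p ∈ P, MvPolynomial.aeval a p = 0) →
        ∀ c ∈ C, MvPolynomial.aeval a c = 0) :=
  charSet_zero_inclusions_general P C hCideal hprem
end

section
/- Under the characteristic-set hypotheses on P, C = [C_1,…,C_r], I_j = ini(C_j), I = {I_1,…,I_r}, and with P_j = P ∪ {I_j}, for any extension field L of K one has the zero decomposition Zero(P) = Zero(C/I) ∪ ⋃_{j=1}^r Zero(P_j), where zeros are taken in L^n. -/
open MvPolynomial

variable {n : ℕ} {K : Type*} [Field K]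

theorem List.getD_mem_of_lt {α : Type*} {l : List α} {j : ℕ} (d : α) (hj : j < l.length) :
    l.getD j d ∈ l := by
  rw [List.getD_eq_getElem _ _ hj]
  exact List.getElem_mem hj

theorem MvPolynomial.aeval_eq_zero_of_mem_span {σ R S : Type*} [CommSemiring R] [CommSemiring S]
    [Algebra R S] {a : σ → S} {T : Set (MvPolynomial σ R)} (hT : ∀ p ∈ T, aeval a p = 0)
    {q : MvPolynomial σ R} (hq : q ∈ Ideal.span T) : aeval a q = 0 := by
  have hker : Ideal.span T ≤ RingHom.ker (aeval a : MvPolynomial σ R →ₐ[R] S) :=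
    Ideal.span_le.mpr fun p hp => RingHom.mem_ker.mpr (hT p hp)
  exact RingHom.mem_ker.mp (hker hq)

theorem MvPolynomial.aeval_eq_zero_of_prod_pow_mul_eq_sum {σ R S ι : Type*} [CommSemiring R]
    [CommSemiring S] [NoZeroDivisors S] [Nontrivial S] [Algebra R S] {a : σ → S} (t : Finset ι)
    {I c G : ι → MvPolynomial σ R} {s : ι → ℕ} {p : MvPolynomial σ R}
    (hc : ∀ j ∈ t, aeval a (c j) = 0) (hI : ∀ j ∈ t, aeval a (I j) ≠ 0)
    (h : (∏ j ∈ t, I j ^ s j) * p = ∑ j ∈ t, G j * c j) : aeval a p = 0 := by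
  have hsum : aeval a (∑ j ∈ t, G j * c j) = 0 := by
    simp only [map_sum, map_mul]
    exact Finset.sum_eq_zero fun j hj => by rw [hc j hj, mul_zero]
  have hprod : aeval a (∏ j ∈ t, I j ^ s j) ≠ 0 := by
    simp only [map_prod, map_pow]
    exact Finset.prod_ne_zero_iff.mpr fun j hj => pow_ne_zero _ (hI j hj)
  rw [← h, map_mul] at hsum
  exact (mul_eq_zero.mp hsum).resolve_left hprod

theorem charSet_zero_decomposition_general
    {n : ℕ} {K : Type*} [Field K]
    {L : Type*} [Field L] [Algebra K L]
    (P : Finset (MvPolynomial (Fin n) K))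
    (C : List (MvPolynomial (Fin n) K))
    (hCideal : ∀ c ∈ C, c ∈ Ideal.span (↑P : Set (MvPolynomial (Fin n) K)))
    (hprem : ∀ p ∈ P, ∃ (s : ℕ → ℕ) (G : ℕ → MvPolynomial (Fin n) K),
      (∏ j ∈ Finset.range C.length, initOf (C.getD j 0) ^ s j) * p
        = ∑ j ∈ Finset.range C.length, G j * C.getD j 0) :
    ∀ a : Fin n → L,
      (∀ p ∈ P, MvPolynomial.aeval a p = 0) ↔
        (((∀ c ∈ C, MvPolynomial.aeval a c = 0) ∧
            (∀ c ∈ C, MvPolynomial.aeval a (initOf c) ≠ 0)) ∨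
          (∃ c ∈ C, (∀ p ∈ P, MvPolynomial.aeval a p = 0) ∧
            MvPolynomial.aeval a (initOf c) = 0)) := by
  intro a
  constructor
  · intro hP
    by_cases hini : ∃ c ∈ C, aeval a (initOf c) = 0
    · obtain ⟨c, hc, hc0⟩ := hini
      exact Or.inr ⟨c, hc, hP, hc0⟩
    · push Not at hini
      exact Or.inl ⟨fun c hc => aeval_eq_zero_of_mem_span hP (hCideal c hc), hini⟩
  · rintro (⟨hC, hI⟩ | ⟨_, _, hP, _⟩)
    · intro p hp
      obtain ⟨s, G, hG⟩ := hprem p hp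
      have hmem : ∀ j ∈ Finset.range C.length, C.getD j 0 ∈ C := fun j hj =>
        List.getD_mem_of_lt 0 (Finset.mem_range.mp hj)
      exact aeval_eq_zero_of_prod_pow_mul_eq_sum _ (fun j hj => hC _ (hmem j hj))
        (fun j hj => hI _ (hmem j hj)) hG
    · exact hP

/-- under the characteristic-set hypotheses,
`Zero(P) = Zero(C/I) ∪ ⋃_j Zero(P ∪ {I_j})` in any extension field `L` of `K`. -/
theorem charSet_zero_decomposition
    {n : ℕ} {K : Type*} [Field K] (hn : 1 ≤ n)
    {L : Type*} [Field L] [Algebra K L]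
    (P : Finset (MvPolynomial (Fin n) K)) (hPne : P.Nonempty)
    (C : List (MvPolynomial (Fin n) K))
    (hCasc : IsAscending C) (hCnc : ∀ c ∈ C, 0 < cls c)
    (hCideal : ∀ c ∈ C, c ∈ Ideal.span (↑P : Set (MvPolynomial (Fin n) K)))
    (hprem : ∀ p ∈ P, ∃ (s : ℕ → ℕ) (G : ℕ → MvPolynomial (Fin n) K),
      (∏ j ∈ Finset.range C.length, initOf (C.getD j 0) ^ s j) * p
        = ∑ j ∈ Finset.range C.length, G j * C.getD j 0) :
    ∀ a : Fin n → L,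
      (∀ p ∈ P, MvPolynomial.aeval a p = 0) ↔
        (((∀ c ∈ C, MvPolynomial.aeval a c = 0) ∧
            (∀ c ∈ C, MvPolynomial.aeval a (initOf c) ≠ 0)) ∨
          (∃ c ∈ C, (∀ p ∈ P, MvPolynomial.aeval a p = 0) ∧
            MvPolynomial.aeval a (initOf c) = 0)) :=
  charSet_zero_decomposition_general P C hCideal hprem
end

section
/- Let P, Q ∈ K[x_1,…,x_n] with Q nonzero, and suppose M is a monomial occurring in the support of P such that the heading term lt(Q) divides M. Then the one-step division reduction R = P − (c/lc(Q))·(M/lt(Q))·Q, where c is the coefficient of M in P and lc(Q) is the coefficient of lt(Q) in Q, satisfies R < P. -/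
open MvPolynomial

variable {n : ℕ} {K : Type*} [Field K]

/-- one-step division reduction: if the heading term `lt(Q)` of a
nonzero `Q` divides a monomial `M` in the support of `P`, then
`R = P − (c/lc(Q))·(M/lt(Q))·Q` satisfies `R < P`. -/
theorem one_step_division_poLt
    {n : ℕ} {K : Type*} [Field K] (hn : 1 ≤ n)
    (P Q : MvPolynomial (Fin n) K) (hQ : Q ≠ 0)
    (M : Fin n →₀ ℕ) (hM : M ∈ P.support)
    (mq : Fin n →₀ ℕ) (hmq : mq ∈ Q.support)
    (hmax : ∀ m' ∈ Q.support, m' ≠ mq → MonLt m' mq)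
    (hdvd : mq ≤ M)
    (R : MvPolynomial (Fin n) K)
    (hR : R = P - MvPolynomial.C (P.coeff M / Q.coeff mq) *
        MvPolynomial.monomial (M - mq) (1 : K) * Q) :
    PoLt R P := by
  classical
  have hQmq : Q.coeff mq ≠ 0 := by simpa using hmq
  set a := P.coeff M / Q.coeff mq with ha
  set d := M - mq with hd
  have hmono : (MvPolynomial.C a * MvPolynomial.monomial d (1:K))
      = MvPolynomial.monomial d a := by
    rw [MvPolynomial.C_mul_monomial, mul_one]
  have hS : ∀ m, (MvPolynomial.C a * MvPolynomial.monomial d (1:K) * Q).coeff m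
      = if d ≤ m then a * Q.coeff (m - d) else 0 := by
    intro m
    rw [hmono, MvPolynomial.coeff_monomial_mul']
  have hdM : d ≤ M := tsub_le_self
  have hMd : M - d = mq := tsub_tsub_cancel_of_le hdvd
  have hRM : R.coeff M = 0 := by
    rw [hR, MvPolynomial.coeff_sub, hS, if_pos hdM, hMd, ha,
      div_mul_cancel₀ _ hQmq, sub_self]
  have hMR : M ∉ R.support := by simp [MvPolynomial.mem_support_iff, hRM]
  refine ⟨M, Finset.mem_sdiff.2 ⟨hM, hMR⟩, ?_⟩
  intro m' hm' hne
  have hSm' : (MvPolynomial.C a * MvPolynomial.monomial d (1:K) * Q).coeff m' ≠ 0 := by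
    intro hz
    have hco : R.coeff m' = P.coeff m' := by
      rw [hR, MvPolynomial.coeff_sub, hz, sub_zero]
    rcases Finset.mem_union.1 hm' with h | h <;>
      rcases Finset.mem_sdiff.1 h with ⟨h1, h2⟩ <;>
      rw [MvPolynomial.mem_support_iff] at h1 <;>
      rw [MvPolynomial.notMem_support_iff] at h2 <;>
      [exact h1 (hco ▸ h2); exact h1 (hco ▸ h2)]
  rw [hS] at hSm'
  by_cases hd' : d ≤ m'
  · rw [if_pos hd'] at hSm'
    have hQm : Q.coeff (m' - d) ≠ 0 := right_ne_zero_of_mul hSm'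
    set m := m' - d with hmdef
    have hmQ : m ∈ Q.support := MvPolynomial.mem_support_iff.2 hQm
    have hm'eq : m' = m + d := (tsub_add_cancel_of_le hd').symm
    have hMeq : M = mq + d := by
      rw [hd, add_comm]
      exact (tsub_add_cancel_of_le hdvd).symm
    have hmne : m ≠ mq := by
      intro hmm
      exact hne (by rw [hm'eq, hmm, hMeq])
    obtain ⟨i, hi1, hi2⟩ := hmax m hmQ hmne
    refine ⟨i, ?_, ?_⟩
    · rw [hm'eq, hMeq]
      simp only [Finsupp.add_apply]
      omega
    · intro j hj
      rw [hm'eq, hMeq]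
      simp only [Finsupp.add_apply, hi2 j hj]
  · rw [if_neg hd'] at hSm'
    exact absurd rfl hSm'
end

section
/- For any polynomial B ∈ K[x_1,…,x_n] and any triangular set [A_1,…,A_r], there exist natural numbers s_1,…,s_r and polynomials G_1,…,G_r and R such that (∏_{i=1}^r ini(A_i)^{s_i})·B = ∑_{i=1}^r G_i·A_i + R and R is reduced with respect to every A_i, i.e. deg(R, lv(A_i)) < ldeg(A_i) for all i (this is the iterated pseudo-division formula defining R = prem(B, [A_1,…,A_r]); in particular R lies in the ideal generated by B, A_1,…,A_r). -/
open MvPolynomial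

variable {n : ℕ} {K : Type*} [Field K]

section PseudoAux

variable {n : ℕ} {K : Type*} [Field K]

lemma support_lcOf {P : MvPolynomial (Fin n) K} {q : Fin n} {u : Fin n →₀ ℕ}
    (hu : u ∈ (lcOf P q).support) :
    ∃ m ∈ P.support, m q = P.degreeOf q ∧ m.erase q = u := by
  rw [MvPolynomial.mem_support_iff] at hu
  rw [lcOf, MvPolynomial.coeff_sum] at hu
  obtain ⟨m, hm, hne⟩ := Finset.exists_ne_zero_of_sum_ne_zero hu
  rw [Finset.mem_filter] at hm
  refine ⟨m, hm.1, hm.2, ?_⟩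
  by_contra h
  rw [MvPolynomial.coeff_monomial, if_neg h] at hne
  exact hne rfl

lemma degreeOf_lcOf_le (P : MvPolynomial (Fin n) K) (q j : Fin n) :
    (lcOf P q).degreeOf j ≤ P.degreeOf j := by
  rw [MvPolynomial.degreeOf_le_iff]
  intro u hu
  obtain ⟨m, hm, -, rfl⟩ := support_lcOf hu
  refine le_trans ?_ (MvPolynomial.monomial_le_degreeOf j hm)
  classical
  rw [Finsupp.erase]
  simp only [Finsupp.coe_mk]
  split <;> simp

lemma degreeOf_lcOf_self (P : MvPolynomial (Fin n) K) (q : Fin n) :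
    (lcOf P q).degreeOf q = 0 := by
  apply Nat.le_zero.mp
  rw [MvPolynomial.degreeOf_le_iff]
  intro u hu
  obtain ⟨m, -, -, rfl⟩ := support_lcOf hu
  simp

lemma coeff_lcOf_of_apply_ne {P : MvPolynomial (Fin n) K} {q : Fin n} {u : Fin n →₀ ℕ}
    (hu : u q ≠ 0) : (lcOf P q).coeff u = 0 := by
  by_contra h
  obtain ⟨m, -, -, rfl⟩ := support_lcOf (MvPolynomial.mem_support_iff.mpr h)
  simp at hu

lemma coeff_lcOf {P : MvPolynomial (Fin n) K} {q : Fin n} {u : Fin n →₀ ℕ}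
    (hu : u q = 0) :
    (lcOf P q).coeff u = P.coeff (u + Finsupp.single q (P.degreeOf q)) := by
  classical
  rw [lcOf, MvPolynomial.coeff_sum]
  rw [Finset.sum_eq_single (u + Finsupp.single q (P.degreeOf q))]
  · rw [MvPolynomial.coeff_monomial, if_pos]
    ext j
    by_cases hj : j = q
    · subst hj; simp [hu]
    · simp [Finsupp.erase_ne hj, Finsupp.single_apply, Ne.symm hj]
  · intro m hm hmne
    rw [Finset.mem_filter] at hm
    rw [MvPolynomial.coeff_monomial, if_neg]
    intro h
    apply hmne
    have := Finsupp.single_add_erase q m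
    rw [hm.2, h] at this
    rw [← this, add_comm]
  · intro h
    rw [Finset.mem_filter, MvPolynomial.mem_support_iff] at h
    push_neg at h
    by_cases hs : P.coeff (u + Finsupp.single q (P.degreeOf q)) = 0
    · rw [MvPolynomial.coeff_monomial]
      split <;> simp [hs]
    · exact absurd (by simp [hu]) (h hs)

/-- The "head part" of `P` in the variable `q`. -/
noncomputable def hiOf (P : MvPolynomial (Fin n) K) (q : Fin n) : MvPolynomial (Fin n) K :=
  MvPolynomial.monomial (Finsupp.single q (P.degreeOf q)) 1 * lcOf P q

lemma coeff_sub_hiOf {P : MvPolynomial (Fin n) K} {q : Fin n} {m : Fin n →₀ ℕ}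
    (hm : P.degreeOf q ≤ m q) : (P - hiOf P q).coeff m = 0 := by
  classical
  have hle : Finsupp.single q (P.degreeOf q) ≤ m := Finsupp.single_le_iff.mpr hm
  rw [MvPolynomial.coeff_sub, hiOf, MvPolynomial.coeff_monomial_mul', if_pos hle, one_mul]
  rcases lt_or_eq_of_le hm with hlt | heq
  · have h1 : P.coeff m = 0 := by
      by_contra h
      exact absurd (MvPolynomial.monomial_le_degreeOf q
        (MvPolynomial.mem_support_iff.mpr h)) (by omega)
    have h2 : (lcOf P q).coeff (m - Finsupp.single q (P.degreeOf q)) = 0 := by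
      apply coeff_lcOf_of_apply_ne
      simp only [Finsupp.coe_tsub, Pi.sub_apply, Finsupp.single_eq_same]
      omega
    rw [h1, h2, sub_zero]
  · have h0 : (m - Finsupp.single q (P.degreeOf q)) q = 0 := by
      simp only [Finsupp.coe_tsub, Pi.sub_apply, Finsupp.single_eq_same]
      omega
    rw [coeff_lcOf h0, sub_eq_zero]
    congr 1
    ext j
    rcases eq_or_ne j q with rfl | hj
    · simp only [Finsupp.coe_add, Pi.add_apply, Finsupp.coe_tsub, Pi.sub_apply,
        Finsupp.single_eq_same]
      omega
    · simp [Finsupp.single_apply, Ne.symm hj]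

lemma degreeOf_sub_hiOf {P : MvPolynomial (Fin n) K} {q : Fin n}
    (he : 0 < P.degreeOf q) : (P - hiOf P q).degreeOf q < P.degreeOf q := by
  rw [MvPolynomial.degreeOf_lt_iff he]
  intro m hm
  by_contra h
  exact absurd (coeff_sub_hiOf (by omega)) (MvPolynomial.mem_support_iff.mp hm)

lemma degreeOf_monomial_le (s : Fin n →₀ ℕ) (c : K) (j : Fin n) :
    (MvPolynomial.monomial s c).degreeOf j ≤ s j := by
  rw [MvPolynomial.degreeOf_le_iff]
  intro m hm
  have := MvPolynomial.support_monomial_subset hm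
  simp only [Finset.mem_singleton] at this
  subst this; exact le_rfl

lemma degreeOf_sub_le' (j : Fin n) (P Q : MvPolynomial (Fin n) K) :
    (P - Q).degreeOf j ≤ max (P.degreeOf j) (Q.degreeOf j) := by
  rw [sub_eq_add_neg]
  refine (MvPolynomial.degreeOf_add_le _ _ _).trans ?_
  rw [MvPolynomial.degreeOf_neg]

/-- Single pseudo-division. -/
lemma pseudo_div (q : Fin n) (A : MvPolynomial (Fin n) K) (hd : 0 < A.degreeOf q) :
    ∀ P : MvPolynomial (Fin n) K,
      ∃ (s : ℕ) (G R : MvPolynomial (Fin n) K),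
        (lcOf A q) ^ s * P = G * A + R ∧ R.degreeOf q < A.degreeOf q ∧
          ∀ j, A.degreeOf j = 0 → R.degreeOf j ≤ P.degreeOf j := by
  suffices H : ∀ N : ℕ, ∀ P : MvPolynomial (Fin n) K, P.degreeOf q < N →
      ∃ (s : ℕ) (G R : MvPolynomial (Fin n) K),
        (lcOf A q) ^ s * P = G * A + R ∧ R.degreeOf q < A.degreeOf q ∧
          ∀ j, A.degreeOf j = 0 → R.degreeOf j ≤ P.degreeOf j by
    exact fun P => H (P.degreeOf q + 1) P (Nat.lt_succ_self _)
  intro N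
  induction N with
  | zero => exact fun P hP => absurd hP (Nat.not_lt_zero _)
  | succ N ih =>
    intro P hP
    by_cases hbase : P.degreeOf q < A.degreeOf q
    · exact ⟨0, 0, P, by ring, hbase, fun j _ => le_rfl⟩
    push_neg at hbase
    have he : 0 < P.degreeOf q := lt_of_lt_of_le hd hbase
    set M : MvPolynomial (Fin n) K :=
      MvPolynomial.monomial (Finsupp.single q (P.degreeOf q - A.degreeOf q)) 1 with hM
    set P' : MvPolynomial (Fin n) K := lcOf A q * P - M * lcOf P q * A with hP'
    have hMm : M * MvPolynomial.monomial (Finsupp.single q (A.degreeOf q)) (1 : K)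
        = MvPolynomial.monomial (Finsupp.single q (P.degreeOf q)) 1 := by
      rw [hM, MvPolynomial.monomial_mul, ← Finsupp.single_add, mul_one,
        Nat.sub_add_cancel hbase]
    have hkey : P' = lcOf A q * (P - hiOf P q) - M * lcOf P q * (A - hiOf A q) := by
      simp only [hP', hiOf]
      linear_combination (-(lcOf P q * lcOf A q)) * hMm
    have hdegP' : P'.degreeOf q < P.degreeOf q := by
      calc P'.degreeOf q ≤ max ((lcOf A q * (P - hiOf P q)).degreeOf q)
            ((M * lcOf P q * (A - hiOf A q)).degreeOf q) := hkey ▸ degreeOf_sub_le' _ _ _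
        _ < P.degreeOf q := by
          have h1 := MvPolynomial.degreeOf_mul_le q (lcOf A q) (P - hiOf P q)
          have h2 := MvPolynomial.degreeOf_mul_le q (M * lcOf P q) (A - hiOf A q)
          have h3 := MvPolynomial.degreeOf_mul_le q M (lcOf P q)
          have h4 := degreeOf_lcOf_self A q
          have h5 := degreeOf_lcOf_self P q
          have h6 := degreeOf_sub_hiOf (q := q) (P := P) he
          have h7 := degreeOf_sub_hiOf (q := q) (P := A) hd
          have h8 : M.degreeOf q ≤ P.degreeOf q - A.degreeOf q := by
            refine (degreeOf_monomial_le _ _ _).trans ?_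
            simp
          omega
    have hdegP'j : ∀ j, A.degreeOf j = 0 → P'.degreeOf j ≤ P.degreeOf j := by
      intro j hj
      have hjq : j ≠ q := fun h => by rw [h] at hj; omega
      have h1 := MvPolynomial.degreeOf_mul_le j (lcOf A q) P
      have h2 := MvPolynomial.degreeOf_mul_le j (M * lcOf P q) A
      have h3 := MvPolynomial.degreeOf_mul_le j M (lcOf P q)
      have h4 := degreeOf_lcOf_le A q j
      have h5 := degreeOf_lcOf_le P q j
      have h8 : M.degreeOf j = 0 := by
        have := degreeOf_monomial_le
          (Finsupp.single q (P.degreeOf q - A.degreeOf q)) (1 : K) j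
        rwa [Finsupp.single_apply, if_neg (Ne.symm hjq), Nat.le_zero] at this
      have h9 := degreeOf_sub_le' j (lcOf A q * P) (M * lcOf P q * A)
      rw [← hP'] at h9
      omega
    obtain ⟨s', G', R', hIH, hRlt, hRj⟩ := ih P' (by omega)
    refine ⟨s' + 1, G' + lcOf A q ^ s' * (M * lcOf P q), R', ?_, hRlt, ?_⟩
    · have hlc : lcOf A q * P = P' + M * lcOf P q * A := by rw [hP']; ring
      calc lcOf A q ^ (s' + 1) * P = lcOf A q ^ s' * (lcOf A q * P) := by ring
        _ = lcOf A q ^ s' * P' + lcOf A q ^ s' * (M * lcOf P q * A) := by rw [hlc]; ring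
        _ = (G' + lcOf A q ^ s' * (M * lcOf P q)) * A + R' := by rw [hIH]; ring
    · intro j hj
      exact (hRj j hj).trans (hdegP'j j hj)

lemma degreeOf_eq_zero_iff' {P : MvPolynomial (Fin n) K} {q : Fin n} :
    P.degreeOf q = 0 ↔ q ∉ P.vars := by
  constructor
  · intro h hq
    rw [MvPolynomial.mem_vars] at hq
    obtain ⟨m, hm, hq⟩ := hq
    have := MvPolynomial.monomial_le_degreeOf q hm
    rw [h, Nat.le_zero] at this
    exact absurd this (Finsupp.mem_support_iff.mp hq)
  · intro h
    apply Nat.le_zero.mp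
    rw [MvPolynomial.degreeOf_le_iff]
    intro m hm
    by_contra hc
    exact h (MvPolynomial.mem_vars q |>.mpr ⟨m, hm, Finsupp.mem_support_iff.mpr (by omega)⟩)

lemma cls_spec {P : MvPolynomial (Fin n) K} (h : 0 < cls P) :
    ∃ q : Fin n, P.vars.max = (q : WithBot (Fin n)) ∧ cls P = q.1 + 1 ∧
      0 < P.degreeOf q := by
  have hne : P.vars.Nonempty := by
    by_contra hc
    rw [Finset.not_nonempty_iff_eq_empty] at hc
    rw [cls, hc] at h
    simp at h
  obtain ⟨q, hq⟩ := Finset.max_of_nonempty hne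
  have hqv : q ∈ P.vars := Finset.mem_of_max hq
  refine ⟨q, hq, ?_, ?_⟩
  · apply le_antisymm
    · refine Finset.sup_le fun i hi => ?_
      have h2 : (i : WithBot (Fin n)) ≤ q := hq ▸ Finset.le_max hi
      have h3 : i ≤ q := by exact_mod_cast h2
      exact Nat.succ_le_succ h3
    · exact Finset.le_sup (f := fun i : Fin n => i.1 + 1) hqv
  · by_contra hc
    push_neg at hc
    rw [Nat.le_zero] at hc
    exact (degreeOf_eq_zero_iff'.mp hc) hqv

end PseudoAux

section IterAux

variable {n : ℕ} {K : Type*} [Field K]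

lemma degreeOf_eq_zero_of_cls_le {P : MvPolynomial (Fin n) K} {q : Fin n}
    (h : cls P ≤ q.1) : P.degreeOf q = 0 := by
  rw [degreeOf_eq_zero_iff']
  intro hq
  have : q.1 + 1 ≤ cls P := Finset.le_sup (f := fun i : Fin n => i.1 + 1) hq
  omega

lemma initOf_eq_lcOf {P : MvPolynomial (Fin n) K} {q : Fin n}
    (h : P.vars.max = (q : WithBot (Fin n))) : initOf P = lcOf P q := by
  rw [initOf, h]
  rfl

lemma iterated_aux :
    ∀ (A : List (MvPolynomial (Fin n) K)), IsTriangular A →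
    ∀ B : MvPolynomial (Fin n) K,
    ∃ (s : ℕ → ℕ) (G : ℕ → MvPolynomial (Fin n) K) (R : MvPolynomial (Fin n) K),
      (∏ i ∈ Finset.range A.length, initOf (A.getD i 0) ^ s i) * B
        = (∑ i ∈ Finset.range A.length, G i * A.getD i 0) + R ∧
      (∀ i, i < A.length → ReducedWrt R (A.getD i 0)) ∧
      (∀ j : Fin n, (∀ P ∈ A, P.degreeOf j = 0) → R.degreeOf j ≤ B.degreeOf j) := by
  intro A
  induction A using List.reverseRecOn with
  | nil =>
    intro _ B
    exact ⟨fun _ => 0, fun _ => 0, B, by simp, by simp, fun j _ => le_rfl⟩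
  | append_singleton T a ihT =>
    intro hA B
    -- basic facts about `a`
    have hTri : IsTriangular T := by
      refine ⟨fun P hP => hA.1 P (by simp [hP]), hA.2.prefix ⟨[a], rfl⟩⟩
    have hlt : ∀ P ∈ T, cls P < cls a := by
      haveI : IsTrans (MvPolynomial (Fin n) K) (fun P Q => cls P < cls Q) :=
        ⟨fun _ _ _ h1 h2 => lt_trans h1 h2⟩
      have hp := (List.isChain_iff_pairwise).mp hA.2
      rw [List.pairwise_append] at hp
      exact fun P hP => hp.2.2 P hP a (by simp)
    have hacls : 0 < cls a := hA.1 a (by simp)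
    obtain ⟨q, hqmax, hqcls, hqdeg⟩ := cls_spec hacls
    have hTdegq : ∀ P ∈ T, P.degreeOf q = 0 := fun P hP =>
      degreeOf_eq_zero_of_cls_le (by have := hlt P hP; omega)
    -- pseudo-divide B by a
    obtain ⟨s₀, G₀, R₀, h₀eq, h₀lt, h₀j⟩ := pseudo_div q a hqdeg B
    -- apply IH to R₀
    obtain ⟨s, G, R, hEq, hRed, hInv⟩ := ihT hTri R₀
    set PT : MvPolynomial (Fin n) K :=
      ∏ i ∈ Finset.range T.length, initOf (T.getD i 0) ^ s i with hPT
    refine ⟨fun i => if i = T.length then s₀ else s i,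
      fun i => if i = T.length then PT * G₀ else G i, R, ?_, ?_, ?_⟩
    · have hlen : (T ++ [a]).length = T.length + 1 := by simp
      have hgetlast : (T ++ [a]).getD T.length 0 = a := by
        rw [List.getD_append_right _ _ _ _ le_rfl]
        simp
      have hget : ∀ i, i < T.length → (T ++ [a]).getD i 0 = T.getD i 0 := fun i hi =>
        List.getD_append _ _ _ _ hi
      have hprodeq : (∏ i ∈ Finset.range T.length,
          initOf ((T ++ [a]).getD i 0) ^ (if i = T.length then s₀ else s i)) = PT := by
        rw [hPT]
        refine Finset.prod_congr rfl fun i hi => ?_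
        have hilt := Finset.mem_range.mp hi
        rw [hget i hilt, if_neg (by omega : ¬ i = T.length)]
      have hsumeq : (∑ i ∈ Finset.range T.length,
          (if i = T.length then PT * G₀ else G i) * (T ++ [a]).getD i 0)
          = ∑ i ∈ Finset.range T.length, G i * T.getD i 0 := by
        refine Finset.sum_congr rfl fun i hi => ?_
        have hilt := Finset.mem_range.mp hi
        rw [hget i hilt, if_neg (by omega : ¬ i = T.length)]
      rw [hlen, Finset.prod_range_succ, Finset.sum_range_succ]
      beta_reduce
      rw [hgetlast]
      simp only [eq_self_iff_true, if_true]
      rw [hprodeq, hsumeq, initOf_eq_lcOf hqmax]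
      linear_combination PT * h₀eq + hEq
    · intro i hi
      rw [List.length_append, List.length_singleton] at hi
      rcases Nat.lt_or_ge i T.length with h | h
      · rw [List.getD_append _ _ _ _ h]
        exact hRed i h
      · have hieq : i = T.length := by omega
        subst hieq
        have hgetlast : (T ++ [a]).getD T.length 0 = a := by
          rw [List.getD_append_right _ _ _ _ le_rfl]
          simp
        rw [hgetlast]
        intro i hi
        have hiq : i = q := by
          rw [hqmax] at hi
          exact_mod_cast hi.symm
        rw [hiq]
        exact lt_of_le_of_lt (hInv q hTdegq) h₀lt
    · intro j hj
      have h1 : R.degreeOf j ≤ R₀.degreeOf j :=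
        hInv j (fun P hP => hj P (by simp [hP]))
      exact h1.trans (h₀j j (hj a (by simp)))

end IterAux

/-- iterated pseudo-division formula: for any `B` and triangular set
`[A_1,…,A_r]` there are `s_i`, `G_i`, `R` with
`(∏ ini(A_i)^{s_i})·B = ∑ G_i·A_i + R`, `R` reduced w.r.t. every `A_i`; in
particular `R ∈ ⟨B, A_1, …, A_r⟩`. -/
theorem iterated_pseudo_division
    {n : ℕ} {K : Type*} [Field K] (hn : 1 ≤ n)
    (B : MvPolynomial (Fin n) K)
    (A : List (MvPolynomial (Fin n) K)) (hA : IsTriangular A) :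
    ∃ (s : ℕ → ℕ) (G : ℕ → MvPolynomial (Fin n) K) (R : MvPolynomial (Fin n) K),
      (∏ i ∈ Finset.range A.length, initOf (A.getD i 0) ^ s i) * B
        = (∑ i ∈ Finset.range A.length, G i * A.getD i 0) + R ∧
      (∀ i, i < A.length → ReducedWrt R (A.getD i 0)) ∧
      R ∈ Ideal.span ({B} ∪ {F | F ∈ A} : Set (MvPolynomial (Fin n) K)) := by
  
  obtain ⟨s, G, R, hEq, hRed, -⟩ := iterated_aux A hA B
  refine ⟨s, G, R, hEq, hRed, ?_⟩
  have hR : R = (∏ i ∈ Finset.range A.length, initOf (A.getD i 0) ^ s i) * B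
      - ∑ i ∈ Finset.range A.length, G i * A.getD i 0 := by
    rw [hEq]; ring
  rw [hR]
  refine Ideal.sub_mem _ (Ideal.mul_mem_left _ _
    (Ideal.subset_span (Set.mem_union_left _ rfl))) ?_
  refine Ideal.sum_mem _ fun i hi => Ideal.mul_mem_left _ _
    (Ideal.subset_span (Set.mem_union_right _ ?_))
  have hi' := Finset.mem_range.mp hi
  rw [List.getD_eq_getElem _ _ hi']
  exact List.getElem_mem _
end
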